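/- With the setup of the previous statement, suppose additionally that the limit G_A𝟙_A := lim_{s→0⁺} ∫_A (P^s𝟙_A − 𝟙_A)/s dμ exists. Then G_A𝟙_A ≤ 0, and ρ^s(A) = 1 + (G_A𝟙_A/μ(A))·s + o(s) as s → 0⁺. -/

import Mathlib

open MeasureTheory Set Filter Asymptotics Topology

/-! Since `P^s` is monotone and fixes constants, `P^s 𝟙_A ≤ 1`, so `∫_A P^s 𝟙_A dμ ≤ μ(A)` and every
difference quotient `∫_A (P^s 𝟙_A − 𝟙_A)/s dμ = (∫_A P^s 𝟙_A dμ − μ(A))/s` is nonpositive; hence so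
is its limit `G_A𝟙_A`. Dividing by `μ(A)`, the same identity reads
`ρ^s(A) = 1 + s · (difference quotient)/μ(A)`, and the difference quotient tends to `G_A𝟙_A`. -/

section RightSlope

variable {I : ℝ → ℝ} {c G : ℝ}

lemma nonpos_of_tendsto_slope_of_le (hslope : Tendsto (fun s => (I s - c) / s) (𝓝[>] 0) (𝓝 G))
    (hle : ∀ s > 0, I s ≤ c) : G ≤ 0 := by
  refine le_of_tendsto hslope ?_
  filter_upwards [self_mem_nhdsWithin] with s (hs : 0 < s)
  exact div_nonpos_of_nonpos_of_nonneg (sub_nonpos.mpr (hle s hs)) hs.le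

lemma isLittleO_div_sub_of_tendsto_slope (hc : c ≠ 0)
    (hslope : Tendsto (fun s => (I s - c) / s) (𝓝[>] 0) (𝓝 G)) :
    (fun s => I s / c - (1 + G / c * s)) =o[𝓝[>] 0] fun s => s := by
  have hvanish : Tendsto (fun s => ((I s - c) / s - G) / c) (𝓝[>] 0) (𝓝 0) := by
    simpa using (hslope.sub_const G).div_const c
  have hpos : ∀ᶠ s in 𝓝[>] (0 : ℝ), 0 < s := self_mem_nhdsWithin
  rw [isLittleO_iff_tendsto' (hpos.mono fun s hs h0 => absurd h0 hs.ne')]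
  refine hvanish.congr' ?_
  filter_upwards [hpos] with s hs
  field_simp
  ring

end RightSlope

section SetIntegral

variable {α : Type*} [MeasurableSpace α] {μ : Measure α} {A : Set α} {h : α → ℝ}

lemma setIntegral_le_measureReal_of_le_one (hμA : μ A ≠ ⊤) (hint : IntegrableOn h A μ)
    (hle : ∀ x, h x ≤ 1) : ∫ x in A, h x ∂μ ≤ μ.real A := by
  calc ∫ x in A, h x ∂μ ≤ ∫ _ in A, (1 : ℝ) ∂μ :=
        setIntegral_mono hint (integrableOn_const hμA) hle
    _ = μ.real A := by simp

lemma setIntegral_sub_indicator_one_div (hA : MeasurableSet A) (hμA : μ A ≠ ⊤)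
    (hint : IntegrableOn h A μ) (s : ℝ) :
    ∫ x in A, (h x - A.indicator (fun _ => 1) x) / s ∂μ = (∫ x in A, h x ∂μ - μ.real A) / s := by
  have hind : ∫ x in A, A.indicator (fun _ => (1 : ℝ)) x ∂μ = μ.real A := by
    rw [setIntegral_indicator hA, inter_self, setIntegral_const, smul_eq_mul, mul_one]
  rw [integral_div, integral_sub hint ((integrableOn_const hμA).indicator hA), hind]

end SetIntegral

theorem stmt9_general {α : Type*} [MeasurableSpace α] (μ : Measure α) [IsProbabilityMeasure μ]
    (P : ℝ → (α → ℝ) → (α → ℝ))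
    (hone : ∀ s, 0 ≤ s → P s (fun _ => 1) = fun _ => 1)
    (hmono : ∀ s, 0 ≤ s → ∀ f g : α → ℝ, (∀ x, f x ≤ g x) → ∀ x, P s f x ≤ P s g x)
    (A : Set α) (hA : MeasurableSet A) (hApos : 0 < μ A)
    (hint : ∀ s, 0 ≤ s → Integrable (P s (A.indicator (fun _ => 1))) μ)
    (GA : ℝ)
    (hlim : Tendsto
      (fun s : ℝ => ∫ x in A,
        (P s (A.indicator (fun _ => 1)) x - A.indicator (fun _ => 1) x) / s ∂μ)
      (𝓝[>] 0) (𝓝 GA)) :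
    GA ≤ 0 ∧
    (fun s : ℝ =>
        (∫ x in A, P s (A.indicator (fun _ => 1)) x ∂μ) / (μ A).toReal
          - (1 + GA / (μ A).toReal * s))
      =o[𝓝[>] (0:ℝ)] (fun s => s) := by
  set f : α → ℝ := A.indicator fun _ => 1
  have hμA : μ A ≠ ⊤ := measure_ne_top μ A
  have hslope : Tendsto (fun s => ((∫ x in A, P s f x ∂μ) - μ.real A) / s) (𝓝[>] 0) (𝓝 GA) :=
    hlim.congr' <| eventually_nhdsWithin_of_forall fun s (hs : 0 < s) =>
      setIntegral_sub_indicator_one_div hA hμA (hint s hs.le).integrableOn s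
  have hPf_le_one : ∀ s ≥ 0, ∀ x, P s f x ≤ 1 := fun s hs x => by
    simpa [hone s hs] using hmono s hs f (fun _ => 1) (fun y => indicator_le_self' (by simp) y) x
  refine ⟨nonpos_of_tendsto_slope_of_le hslope fun s hs => ?_,
    isLittleO_div_sub_of_tendsto_slope (ENNReal.toReal_pos hApos.ne' hμA).ne' hslope⟩
  exact setIntegral_le_measureReal_of_le_one hμA (hint s hs.le).integrableOn (hPf_le_one s hs.le)

/-- First-order expansion of the residence ratio: if the generator functional
`G_A𝟙_A = lim_{s→0⁺} ∫_A (P^s𝟙_A − 𝟙_A)/s dμ` exists, then `G_A𝟙_A ≤ 0` and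
`ρ^s(A) = 1 + (G_A𝟙_A/μ(A))·s + o(s)` as `s → 0⁺`. -/
theorem stmt9 {α : Type*} [MeasurableSpace α] (μ : Measure α) [IsProbabilityMeasure μ]
    (P : ℝ → (α → ℝ) → (α → ℝ))
    (hid : ∀ f, P 0 f = f)
    (hzero : ∀ s, 0 ≤ s → P s (fun _ => 0) = fun _ => 0)
    (hone : ∀ s, 0 ≤ s → P s (fun _ => 1) = fun _ => 1)
    (hmono : ∀ s, 0 ≤ s → ∀ f g : α → ℝ, (∀ x, f x ≤ g x) → ∀ x, P s f x ≤ P s g x)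
    (hpreserve : ∀ s, 0 ≤ s → ∀ f : α → ℝ, Integrable f μ → ∫ x, P s f x ∂μ = ∫ x, f x ∂μ)
    (A : Set α) (hA : MeasurableSet A) (hApos : 0 < μ A)
    (hint : ∀ s, 0 ≤ s → Integrable (P s (A.indicator (fun _ => 1))) μ)
    (GA : ℝ)
    (hlim : Tendsto
      (fun s : ℝ => ∫ x in A,
        (P s (A.indicator (fun _ => 1)) x - A.indicator (fun _ => 1) x) / s ∂μ)
      (𝓝[>] 0) (𝓝 GA)) :
    GA ≤ 0 ∧
    (fun s : ℝ =>
        (∫ x in A, P s (A.indicator (fun _ => 1)) x ∂μ) / (μ A).toReal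
          - (1 + GA / (μ A).toReal * s))
      =o[𝓝[>] (0:ℝ)] (fun s => s) :=
  stmt9_general μ P hone hmono A hA hApos hint GA hlim
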